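/- arXiv:2402.18523 — 2 statements merged into one kernel-verified Lean document; each statement's English description precedes it below -/
import Mathlib

section
/- For σ = 10, ρ = 28, b = 8/3, every solution of the Lorenz system that starts in the sublevel set E = {V ≤ 200²} of V(x,y,z) = 28x² + 10y² + 10(z−56)² remains in E for all positive times. -/
/-!
Along a Lorenz trajectory, `V = ρx² + σy² + σ(z − 2ρ)²` has derivative
`−2σ(ρx² + y² + bz² − 2ρbz)`: the cubic and the `xy` terms cancel. For the classical parameters
this is negative on the level set `V = 200²`, and a function that starts at or below a level
and strictly decreases whenever it sits on that level can never cross it.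
-/

open Set

theorem image_le_of_hasDerivAt_neg_at_level {f f' : ℝ → ℝ} {a M : ℝ}
    (hf : ∀ t ≥ a, HasDerivAt f (f' t) t) (ha : f a ≤ M)
    (hM : ∀ t ≥ a, f t = M → f' t < 0) : ∀ t ≥ a, f t ≤ M := by
  intro t ht
  have hcont : ContinuousOn f (Icc a t) := fun s hs => (hf s hs.1).continuousAt.continuousWithinAt
  exact image_le_of_deriv_right_lt_deriv_boundary' (B := fun _ => M) (B' := 0) hcont
    (fun s hs => (hf s hs.1).hasDerivWithinAt) ha continuousOn_const
    (fun s _ => hasDerivWithinAt_const s _ M) (fun s hs => hM s hs.1) ⟨ht, le_rfl⟩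

section Lorenz

variable {σ ρ b : ℝ} {x y z : ℝ → ℝ} {t : ℝ}

def lorenzLyapunov (σ ρ x y z : ℝ) : ℝ := ρ * x ^ 2 + σ * y ^ 2 + σ * (z - 2 * ρ) ^ 2

theorem hasDerivAt_lorenzLyapunov (hx : HasDerivAt x (σ * (y t - x t)) t)
    (hy : HasDerivAt y (ρ * x t - y t - x t * z t) t)
    (hz : HasDerivAt z (x t * y t - b * z t) t) :
    HasDerivAt (fun s => lorenzLyapunov σ ρ (x s) (y s) (z s))
      (-2 * σ * (ρ * x t ^ 2 + y t ^ 2 + b * z t ^ 2 - 2 * ρ * b * z t)) t := by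
  have hV := (((hx.fun_pow 2).const_mul ρ).fun_add ((hy.fun_pow 2).const_mul σ)).fun_add
    (((hz.sub_const (2 * ρ)).fun_pow 2).const_mul σ)
  refine hV.congr_deriv ?_
  ring

theorem lorenzLyapunov_deriv_neg_of_eq {x y z : ℝ} (h : lorenzLyapunov 10 28 x y z = 200 ^ 2) :
    -2 * 10 * (28 * x ^ 2 + y ^ 2 + 8 / 3 * z ^ 2 - 2 * 28 * (8 / 3) * z) < 0 := by
  unfold lorenzLyapunov at h
  -- `V̇ + 2(V − 200²) = −504x² − (100/3)(z − 56/5)² − 39296/3`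
  nlinarith [sq_nonneg x, sq_nonneg (z - 56 / 5)]

end Lorenz

/-- The sublevel set `E = {V ≤ 200²}` of `V(x,y,z) = 28x² + 10y² + 10(z−56)²` is positively
invariant for the standard-parameter Lorenz system. -/
theorem lorenz_trapping_region
    (x y z : ℝ → ℝ)
    (hx : ∀ t, HasDerivAt x (10 * (y t - x t)) t)
    (hy : ∀ t, HasDerivAt y (28 * x t - y t - x t * z t) t)
    (hz : ∀ t, HasDerivAt z (x t * y t - (8/3) * z t) t)
    (h0 : 28 * (x 0)^2 + 10 * (y 0)^2 + 10 * (z 0 - 56)^2 ≤ 200^2) :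
    ∀ t ≥ (0:ℝ), 28 * (x t)^2 + 10 * (y t)^2 + 10 * (z t - 56)^2 ≤ 200^2 := by
  have hV : ∀ t, lorenzLyapunov 10 28 (x t) (y t) (z t)
      = 28 * (x t)^2 + 10 * (y t)^2 + 10 * (z t - 56)^2 := fun t => by
    unfold lorenzLyapunov; norm_num
  simp only [← hV] at h0 ⊢
  exact image_le_of_hasDerivAt_neg_at_level
    (fun t _ => hasDerivAt_lorenzLyapunov (hx t) (hy t) (hz t)) h0
    fun _ _ => lorenzLyapunov_deriv_neg_of_eq
end

section
/- (Hungarian lemma, sufficiency direction) If pₘ(c) = fₘ(c) − cₘ gₘ(c) for m = 1,…,M, where fₘ and gₘ are polynomials with nonnegative coefficients, then the system ċₘ = pₘ(c) is the induced mass-action kinetic differential equation of some reaction network: namely the canonic realization, in which each monomial k·∏ c_p^{α_p} with k > 0 in pₘ gives the step ∑α_p X(p) → ∑(α_p + δ_{mp}) X(p) with rate coefficient k, and each monomial −k·∏ c_p^{α_p} gives the step ∑α_p X(p) → ∑(α_p − δ_{mp}) X(p). -/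
open MvPolynomial

/-- Hungarian lemma, sufficiency direction: if each `pₘ` decomposes as `fₘ − cₘ·gₘ` with
`fₘ, gₘ` polynomials having nonnegative coefficients, then the system `ċₘ = pₘ(c)` is the
induced mass-action kinetic differential equation of some reaction network: there are
stoichiometric coefficient matrices `α, β` (with nonnegative integer entries) and positive
rate coefficients `k` such that
`pₘ(c) = ∑_r (β_{mr} − α_{mr}) k_r ∏_p c_p^{α_{pr}}` for all `c`. -/
theorem hungarian_lemma_sufficiency
    (M : ℕ) (p f g : Fin M → MvPolynomial (Fin M) ℝ)
    (hf : ∀ m d, 0 ≤ (f m).coeff d) (hg : ∀ m d, 0 ≤ (g m).coeff d)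
    (hdecomp : ∀ m, p m = f m - X m * g m) :
    ∃ (R : ℕ) (α β : Fin M → Fin R → ℕ) (k : Fin R → ℝ),
      (∀ r, 0 < k r) ∧
      ∀ (c : Fin M → ℝ) (m : Fin M),
        eval c (p m) =
          ∑ r : Fin R, ((β m r : ℝ) - (α m r : ℝ)) * k r * ∏ q : Fin M, c q ^ α q r := by
  classical
  let T : Type := Σ m : Fin M, ((↥(f m).support) ⊕ (↥(g m).support))
  let A : T → Fin M → ℕ := fun t q =>
    Sum.elim (fun (d : ↥(f t.1).support) => (d : Fin M →₀ ℕ) q)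
             (fun (d : ↥(g t.1).support) => (d : Fin M →₀ ℕ) q + if q = t.1 then 1 else 0) t.2
  let B : T → Fin M → ℕ := fun t q =>
    Sum.elim (fun (d : ↥(f t.1).support) => (d : Fin M →₀ ℕ) q + if q = t.1 then 1 else 0)
             (fun (d : ↥(g t.1).support) => (d : Fin M →₀ ℕ) q) t.2
  let K : T → ℝ := fun t =>
    Sum.elim (fun (d : ↥(f t.1).support) => (f t.1).coeff d)
             (fun (d : ↥(g t.1).support) => (g t.1).coeff d) t.2
  let e : Fin (Fintype.card T) ≃ T := (Fintype.equivFin T).symm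
  refine ⟨Fintype.card T, fun q r => A (e r) q, fun q r => B (e r) q, fun r => K (e r),
    ?_, ?_⟩
  · intro r
    show 0 < K (e r)
    obtain ⟨m, d | d⟩ := e r
    · exact lt_of_le_of_ne (hf m d) (Ne.symm (mem_support_iff.mp d.2))
    · exact lt_of_le_of_ne (hg m d) (Ne.symm (mem_support_iff.mp d.2))
  · intro c m
    show eval c (p m) = ∑ r : Fin (Fintype.card T),
      ((B (e r) m : ℝ) - (A (e r) m : ℝ)) * K (e r) * ∏ q : Fin M, c q ^ A (e r) q
    have hsum : ∑ r : Fin (Fintype.card T),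
        ((B (e r) m : ℝ) - (A (e r) m : ℝ)) * K (e r) * ∏ q : Fin M, c q ^ A (e r) q
        = ∑ t : T, ((B t m : ℝ) - (A t m : ℝ)) * K t * ∏ q : Fin M, c q ^ A t q :=
      Equiv.sum_comp e (fun t => ((B t m : ℝ) - (A t m : ℝ)) * K t * ∏ q : Fin M, c q ^ A t q)
    rw [hsum]
    rw [← Finset.univ_sigma_univ, Finset.sum_sigma]
    rw [Finset.sum_eq_single m]
    · -- the m-th summand
      rw [Fintype.sum_sum_type]
      have hfm : ∑ d : ↥(f m).support,
          ((B ⟨m, Sum.inl d⟩ m : ℝ) - (A ⟨m, Sum.inl d⟩ m : ℝ)) * K ⟨m, Sum.inl d⟩ *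
            ∏ q : Fin M, c q ^ A ⟨m, Sum.inl d⟩ q
          = eval c (f m) := by
        rw [eval_eq']
        rw [← Finset.sum_attach ((f m).support)
          (fun d => (f m).coeff d * ∏ q : Fin M, c q ^ d q)]
        refine Finset.sum_congr rfl fun d _ => ?_
        simp only [A, B, K, Sum.elim_inl, if_pos rfl]
        push_cast
        ring
      have hgm : ∑ d : ↥(g m).support,
          ((B ⟨m, Sum.inr d⟩ m : ℝ) - (A ⟨m, Sum.inr d⟩ m : ℝ)) * K ⟨m, Sum.inr d⟩ *
            ∏ q : Fin M, c q ^ A ⟨m, Sum.inr d⟩ q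
          = -(c m * eval c (g m)) := by
        rw [eval_eq']
        rw [Finset.mul_sum, ← Finset.sum_neg_distrib,
          ← Finset.sum_attach ((g m).support)
          (fun d => -(c m * ((g m).coeff d * ∏ q : Fin M, c q ^ d q)))]
        refine Finset.sum_congr rfl fun d _ => ?_
        simp only [A, B, K, Sum.elim_inr, if_pos rfl]
        have hprod : ∏ q : Fin M, c q ^ ((d : Fin M →₀ ℕ) q + if q = m then 1 else 0)
            = (∏ q : Fin M, c q ^ (d : Fin M →₀ ℕ) q) * c m := by
          simp only [pow_add]
          rw [Finset.prod_mul_distrib]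
          congr 1
          simp [pow_ite, Finset.prod_ite_eq']
        rw [hprod]
        push_cast
        ring
      rw [hfm, hgm, hdecomp m]
      simp only [eval_sub, eval_mul, eval_X]
      ring
    · -- other summands vanish
      intro m' _ hm'
      rw [Fintype.sum_sum_type]
      have h1 : ∀ d : ↥(f m').support,
          ((B ⟨m', Sum.inl d⟩ m : ℝ) - (A ⟨m', Sum.inl d⟩ m : ℝ)) * K ⟨m', Sum.inl d⟩ *
            ∏ q : Fin M, c q ^ A ⟨m', Sum.inl d⟩ q = 0 := by
        intro d
        simp only [A, B, K, Sum.elim_inl, if_neg hm'.symm]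
        simp
      have h2 : ∀ d : ↥(g m').support,
          ((B ⟨m', Sum.inr d⟩ m : ℝ) - (A ⟨m', Sum.inr d⟩ m : ℝ)) * K ⟨m', Sum.inr d⟩ *
            ∏ q : Fin M, c q ^ A ⟨m', Sum.inr d⟩ q = 0 := by
        intro d
        simp only [A, B, K, Sum.elim_inr, if_neg hm'.symm]
        simp
      simp [h1, h2]
    · intro h
      exact absurd (Finset.mem_univ m) h
end
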